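/- The semi-enrichment transformation characterizes semi-oblivious termination: for a finite set Σ of tgd's, every (fair) semi-oblivious chase sequence with Σ terminates on every instance if and only if every (fair) standard chase sequence with the semi-enriched set Σ̃ terminates on every instance, where Σ̃ replaces each tgd α(x̄,ȳ) → ∃z̄ β(x̄,z̄) by α(x̄,ȳ) → ∃z̄ (β(x̄,z̄) ∧ H_ξ(x̄)) with H_ξ a fresh relation symbol for that tgd, of arity |x̄|. -/

import Mathlib

/-! Common framework: instances, homomorphisms, tgds, chase variants. -/

inductive Val where
  | c : ℕ → Val
  | n : ℕ → Val
deriving DecidableEq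

structure Atom (Rel : Type) where
  rel : Rel
  args : List Val

abbrev Inst (Rel : Type) := Set (Atom Rel)

def mapAtom {Rel : Type} (h : Val → Val) (a : Atom Rel) : Atom Rel :=
  ⟨a.rel, a.args.map h⟩

/-- Homomorphisms fix constants. -/
def ConstFix (h : Val → Val) : Prop := ∀ k, h (Val.c k) = Val.c k

def IsHom {Rel : Type} (h : Val → Val) (I J : Inst Rel) : Prop :=
  ConstFix h ∧ ∀ a ∈ I, mapAtom h a ∈ J

def domI {Rel : Type} (I : Inst Rel) : Set Val :=
  {v | ∃ a ∈ I, v ∈ a.args}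

/-- Terms in dependencies: `inl v` is variable `v`, `inr k` is constant `k`. -/
abbrev Tm := ℕ ⊕ ℕ

structure TAtom (Rel : Type) where
  rel : Rel
  args : List Tm

def TAtom.vars {Rel : Type} (a : TAtom Rel) : Set ℕ := {v | Sum.inl v ∈ a.args}

def varsOf {Rel : Type} (S : Set (TAtom Rel)) : Set ℕ := ⋃ a ∈ S, a.vars

/-- A tuple-generating dependency: body → ∃ z̄ head; the existential
variables are exactly the head variables not occurring in the body. -/
structure TGD (Rel : Type) where
  body : Set (TAtom Rel)
  head : Set (TAtom Rel)

def applyT (g : ℕ → Val) : Tm → Val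
  | Sum.inl v => g v
  | Sum.inr k => Val.c k

def applyA {Rel : Type} (g : ℕ → Val) (a : TAtom Rel) : Atom Rel :=
  ⟨a.rel, a.args.map (applyT g)⟩

def instT {Rel : Type} (g : ℕ → Val) (S : Set (TAtom Rel)) : Inst Rel :=
  (applyA g) '' S

def frontierV {Rel : Type} (ξ : TGD Rel) : Set ℕ := varsOf ξ.body ∩ varsOf ξ.head

def evars {Rel : Type} (ξ : TGD Rel) : Set ℕ := varsOf ξ.head \ varsOf ξ.body

def EqOnBody {Rel : Type} (ξ : TGD Rel) (g g' : ℕ → Val) : Prop :=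
  ∀ v ∈ varsOf ξ.body, g v = g' v

def EqOnFrontier {Rel : Type} (ξ : TGD Rel) (g g' : ℕ → Val) : Prop :=
  ∀ v ∈ frontierV ξ, g v = g' v

/-- `(ξ, g)` is a trigger on `I`. -/
def IsTrigger {Rel : Type} (ξ : TGD Rel) (g : ℕ → Val) (I : Inst Rel) : Prop :=
  instT g ξ.body ⊆ I

/-- `(ξ, g)` is an active trigger on `I`. -/
def Active {Rel : Type} (ξ : TGD Rel) (g : ℕ → Val) (I : Inst Rel) : Prop :=
  IsTrigger ξ g I ∧ ¬ ∃ g', EqOnBody ξ g g' ∧ instT g' ξ.head ⊆ I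

/-- `I` satisfies the tgd `ξ`. -/
def Sat {Rel : Type} (I : Inst Rel) (ξ : TGD Rel) : Prop := ∀ g, ¬ Active ξ g I

/-- `g'` extends `g` by assigning distinct fresh nulls to the existential
variables of `ξ`. -/
def FreshExt {Rel : Type} (I : Inst Rel) (ξ : TGD Rel) (g g' : ℕ → Val) : Prop :=
  EqOnBody ξ g g' ∧
  (∀ v ∈ evars ξ, (∃ k, g' v = Val.n k) ∧ g' v ∉ domI I) ∧
  (∀ v ∈ evars ξ, ∀ w ∈ evars ξ, g' v = g' w → v = w)

def NoActive {Rel : Type} (D : Set (TGD Rel)) (I : Inst Rel) : Prop :=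
  ∀ ξ ∈ D, ∀ g, ¬ Active ξ g I

/-- A standard-chase step. -/
def StdStep {Rel : Type} (D : Set (TGD Rel)) (I J : Inst Rel) : Prop :=
  ∃ ξ ∈ D, ∃ g g', Active ξ g I ∧ FreshExt I ξ g g' ∧ J = I ∪ instT g' ξ.head

/-- A standard chase sequence (stuttering once no active trigger remains). -/
structure StdSeq {Rel : Type} (D : Set (TGD Rel)) (I : Inst Rel) where
  inst : ℕ → Inst Rel
  init : inst 0 = I
  step : ∀ i, StdStep D (inst i) (inst (i + 1)) ∨
    (NoActive D (inst i) ∧ inst (i + 1) = inst i)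

def StdSeq.Terminates {Rel : Type} {D : Set (TGD Rel)} {I : Inst Rel}
    (s : StdSeq D I) : Prop :=
  ∃ i, NoActive D (s.inst i)

/-- Fairness: every active trigger is eventually fired or deactivated. -/
def StdSeq.Fair {Rel : Type} {D : Set (TGD Rel)} {I : Inst Rel}
    (s : StdSeq D I) : Prop :=
  ∀ i, ∀ ξ ∈ D, ∀ g, Active ξ g (s.inst i) → ∃ j, i ≤ j ∧ ¬ Active ξ g (s.inst j)

/-- An oblivious chase sequence: fires triggers (active or not), each
equivalence class (identified by the body variables) at most once. -/
structure OblSeq {Rel : Type} (D : Set (TGD Rel)) (I : Inst Rel) where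
  inst : ℕ → Inst Rel
  fired : ℕ → Option (TGD Rel × (ℕ → Val))
  init : inst 0 = I
  step : ∀ i, (fired i).elim (inst (i + 1) = inst i)
    (fun p => p.1 ∈ D ∧ IsTrigger p.1 p.2 (inst i) ∧
      ∃ g', FreshExt (inst i) p.1 p.2 g' ∧ inst (i + 1) = inst i ∪ instT g' p.1.head)
  once : ∀ i j ξ g g', fired i = some (ξ, g) → fired j = some (ξ, g') →
    EqOnBody ξ g g' → i = j

def OblSeq.Fires {Rel : Type} {D : Set (TGD Rel)} {I : Inst Rel}
    (s : OblSeq D I) (ξ : TGD Rel) (g : ℕ → Val) : Prop :=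
  ∃ j g₀, s.fired j = some (ξ, g₀) ∧ EqOnBody ξ g₀ g

/-- The oblivious chase terminates: only finitely many firings occur. -/
def OblSeq.Terminates {Rel : Type} {D : Set (TGD Rel)} {I : Inst Rel}
    (s : OblSeq D I) : Prop :=
  ∃ i, ∀ j, i ≤ j → s.fired j = none

/-- Fairness: every applicable trigger is eventually fired. -/
def OblSeq.Fair {Rel : Type} {D : Set (TGD Rel)} {I : Inst Rel}
    (s : OblSeq D I) : Prop :=
  ∀ i, ∀ ξ ∈ D, ∀ g, IsTrigger ξ g (s.inst i) → s.Fires ξ g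

/-- A semi-oblivious chase sequence: like the oblivious one, but triggers are
identified when they agree on the frontierV variables. -/
structure SoblSeq {Rel : Type} (D : Set (TGD Rel)) (I : Inst Rel) where
  inst : ℕ → Inst Rel
  fired : ℕ → Option (TGD Rel × (ℕ → Val))
  init : inst 0 = I
  step : ∀ i, (fired i).elim (inst (i + 1) = inst i)
    (fun p => p.1 ∈ D ∧ IsTrigger p.1 p.2 (inst i) ∧
      ∃ g', FreshExt (inst i) p.1 p.2 g' ∧ inst (i + 1) = inst i ∪ instT g' p.1.head)
  once : ∀ i j ξ g g', fired i = some (ξ, g) → fired j = some (ξ, g') →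
    EqOnFrontier ξ g g' → i = j

def SoblSeq.Fires {Rel : Type} {D : Set (TGD Rel)} {I : Inst Rel}
    (s : SoblSeq D I) (ξ : TGD Rel) (g : ℕ → Val) : Prop :=
  ∃ j g₀, s.fired j = some (ξ, g₀) ∧ EqOnFrontier ξ g₀ g

def SoblSeq.Terminates {Rel : Type} {D : Set (TGD Rel)} {I : Inst Rel}
    (s : SoblSeq D I) : Prop :=
  ∃ i, ∀ j, i ≤ j → s.fired j = none

def SoblSeq.Fair {Rel : Type} {D : Set (TGD Rel)} {I : Inst Rel}
    (s : SoblSeq D I) : Prop :=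
  ∀ i, ∀ ξ ∈ D, ∀ g, IsTrigger ξ g (s.inst i) → s.Fires ξ g

/-- Lift an atom over `Rel` to the enriched schema `Rel ⊕ Fin N`. -/
def liftA {Rel : Type} {N : ℕ} (a : TAtom Rel) : TAtom (Rel ⊕ Fin N) :=
  ⟨Sum.inl a.rel, a.args⟩

/-- The semi-enrichment of the tgd `ξ` (indexed `i`), adding the head atom
`H_i(x̄)` over the frontier variables `x̄` (listed by `fl`). -/
def semiEnrich {Rel : Type} {N : ℕ} (fl : Fin N → List ℕ)
    (ξs : Fin N → TGD Rel) (i : Fin N) : TGD (Rel ⊕ Fin N) :=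
  ⟨liftA '' (ξs i).body,
   insert ⟨Sum.inr i, (fl i).map Sum.inl⟩ (liftA '' (ξs i).head)⟩

namespace StmtAux
open Classical

noncomputable section

def valEquiv : Val ≃ (ℕ ⊕ ℕ) where
  toFun v := match v with | .c k => .inl k | .n k => .inr k
  invFun t := match t with | .inl k => .c k | .inr k => .n k
  left_inv v := by cases v <;> rfl
  right_inv t := by cases t <;> rfl

instance : Denumerable Val := Denumerable.ofEquiv _ valEquiv

/-- infinitely many unused null indices -/
def FreeInf {R : Type} (I : Inst R) : Prop := {k : ℕ | Val.n k ∉ domI I}.Infinite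

lemma mem_varsOf {R : Type} {S : Set (TAtom R)} {v : ℕ} :
    v ∈ varsOf S ↔ ∃ a ∈ S, Sum.inl v ∈ a.args := by
  simp [varsOf, TAtom.vars, Set.mem_iUnion]

lemma frontier_subset_body {R : Type} (ξ : TGD R) : frontierV ξ ⊆ varsOf ξ.body :=
  Set.inter_subset_left

lemma trigger_val_mem {R : Type} {ξ : TGD R} {g : ℕ → Val} {I : Inst R}
    (h : IsTrigger ξ g I) {v : ℕ} (hv : v ∈ varsOf ξ.body) : g v ∈ domI I := by
  rcases mem_varsOf.1 hv with ⟨a, ha, hva⟩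
  refine ⟨applyA g a, h ⟨a, ha, rfl⟩, ?_⟩
  exact List.mem_map.2 ⟨Sum.inl v, hva, rfl⟩

lemma applyA_congr {R : Type} {g g' : ℕ → Val} {a : TAtom R}
    (h : ∀ v, Sum.inl v ∈ a.args → g v = g' v) : applyA g a = applyA g' a := by
  unfold applyA
  congr 1
  apply List.map_congr_left
  rintro (v | k) hv
  · exact h v hv
  · rfl

/-- If the head of `ξ` is satisfied via `g'` extending `g`, then it is also
satisfied for any `g₂` agreeing with `g` on the frontier. -/
lemma satPersist {R : Type} {ξ : TGD R} {g g' g₂ : ℕ → Val} {K : Inst R}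
    (h1 : EqOnBody ξ g g') (h2 : instT g' ξ.head ⊆ K)
    (h3 : EqOnFrontier ξ g g₂) :
    ∃ g₂', EqOnBody ξ g₂ g₂' ∧ instT g₂' ξ.head ⊆ K := by
  refine ⟨fun v => if v ∈ varsOf ξ.body then g₂ v else g' v, ?_, ?_⟩
  · intro v hv; simp [hv]
  · rintro x ⟨a, ha, rfl⟩
    have : applyA (fun v => if v ∈ varsOf ξ.body then g₂ v else g' v) a = applyA g' a := by
      apply applyA_congr
      intro v hva
      by_cases hb : v ∈ varsOf ξ.body
      · have hf : v ∈ frontierV ξ := ⟨hb, mem_varsOf.2 ⟨a, ha, hva⟩⟩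
        simp only [hb, if_pos]
        rw [← h3 v hf, h1 v hb]
      · simp [hb]
    rw [this]
    exact h2 ⟨a, ha, rfl⟩

lemma not_active_of_sat {R : Type} {ξ : TGD R} {g : ℕ → Val} {K : Inst R}
    (h : ∃ g', EqOnBody ξ g g' ∧ instT g' ξ.head ⊆ K) : ¬ Active ξ g K :=
  fun hA => hA.2 h

lemma sat_mono {R : Type} {ξ : TGD R} {g : ℕ → Val} {K K' : Inst R}
    (hKK : K ⊆ K') (h : ∃ g', EqOnBody ξ g g' ∧ instT g' ξ.head ⊆ K) :
    ∃ g', EqOnBody ξ g g' ∧ instT g' ξ.head ⊆ K' := by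
  rcases h with ⟨g', h1, h2⟩; exact ⟨g', h1, h2.trans hKK⟩

lemma trigger_mono {R : Type} {ξ : TGD R} {g : ℕ → Val} {K K' : Inst R}
    (hKK : K ⊆ K') (h : IsTrigger ξ g K) : IsTrigger ξ g K' := h.trans hKK

/-- Choice of a fresh extension preserving `FreeInf`. -/
lemma freshChoice {R : Type} {I : Inst R} {ξ : TGD R} {g : ℕ → Val}
    (hT : IsTrigger ξ g I) (hF : FreeInf I) :
    ∃ g', FreshExt I ξ g g' ∧ FreeInf (I ∪ instT g' ξ.head) := by
  set S := {k : ℕ | Val.n k ∉ domI I} with hS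
  have e : ℕ ↪ S := hF.natEmbedding
  refine ⟨fun v => if v ∈ evars ξ then Val.n (e (2*v+1)) else g v, ⟨?_, ?_, ?_⟩, ?_⟩
  · intro v hv
    have : v ∉ evars ξ := fun h => h.2 hv
    simp [this]
  · intro v hv
    constructor
    · exact ⟨(e (2*v+1) : ℕ), by simp [hv]⟩
    · simp only [hv, if_pos]
      exact (e (2*v+1)).2
  · intro v hv w hw h
    simp only [hv, hw, if_pos] at h
    have h2 : ((e (2*v+1)) : ℕ) = ((e (2*w+1)) : ℕ) := by injection h
    have := e.injective (Subtype.ext h2)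
    omega
  · -- FreeInf of the union
    have hmem : ∀ u : ℕ, ((e (2*u)) : ℕ) ∈ {k : ℕ | Val.n k ∉ domI (I ∪ instT (fun v => if v ∈ evars ξ then Val.n (e (2*v+1)) else g v) ξ.head)} := by
      intro u
      intro hd
      rcases hd with ⟨a, ha, hva⟩
      rcases ha with ha | ha
      · exact (e (2*u)).2 ⟨a, ha, hva⟩
      · rcases ha with ⟨b, hb, rfl⟩
        rcases List.mem_map.1 hva with ⟨tm, htm, heq⟩
        cases tm with
        | inr k => simp [applyT] at heq
        | inl v =>
          simp only [applyT] at heq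
          by_cases hv : v ∈ evars ξ
          · simp only [hv, if_pos] at heq
            have h2 : (2*v+1 : ℕ) = 2*u := by
              have := e.injective (Subtype.ext (by injection heq))
              omega
            omega
          · simp only [hv, if_neg, ite_false] at heq
            have hvb : v ∈ varsOf ξ.body := by
              by_contra hvb
              exact hv ⟨mem_varsOf.2 ⟨b, hb, htm⟩, hvb⟩
            have := trigger_val_mem hT hvb
            rw [heq] at this
            exact (e (2*u)).2 this
    exact Set.infinite_of_injective_forall_mem
      (f := fun u : ℕ => ((e (2*u)) : ℕ))
      (fun u u' h => by have := e.injective (Subtype.ext h); omega) hmem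

end
end StmtAux

namespace StmtAux
open Classical
noncomputable section

variable {R : Type} {N : ℕ}

lemma varsOf_lift (S : Set (TAtom R)) :
    varsOf ((liftA (N := N)) '' S) = varsOf S := by
  ext v
  simp only [mem_varsOf]
  constructor
  · rintro ⟨a', ⟨a, ha, rfl⟩, hv⟩; exact ⟨a, ha, hv⟩
  · rintro ⟨a, ha, hv⟩; exact ⟨liftA a, ⟨a, ha, rfl⟩, hv⟩

lemma varsOf_insert (a : TAtom R) (S : Set (TAtom R)) :
    varsOf (insert a S) = a.vars ∪ varsOf S := by
  ext v
  simp only [mem_varsOf, Set.mem_union, Set.mem_insert_iff]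
  constructor
  · rintro ⟨b, (rfl | hb), hv⟩
    · exact Or.inl hv
    · exact Or.inr ⟨b, hb, hv⟩
  · rintro (hv | ⟨b, hb, hv⟩)
    · exact ⟨a, Or.inl rfl, hv⟩
    · exact ⟨b, Or.inr hb, hv⟩

section SE
variable (fl : Fin N → List ℕ) (ξs : Fin N → TGD R) (k : Fin N)
variable (hfl : ∀ v, v ∈ fl k ↔ v ∈ frontierV (ξs k))

include hfl in
lemma hatom_vars : (TAtom.vars (⟨Sum.inr k, (fl k).map Sum.inl⟩ : TAtom (R ⊕ Fin N)))
    = frontierV (ξs k) := by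
  ext v
  simp only [TAtom.vars, Set.mem_setOf_eq, List.mem_map]
  constructor
  · rintro ⟨w, hw, hwe⟩
    cases hwe
    exact (hfl v).1 hw
  · intro hv; exact ⟨v, (hfl v).2 hv, rfl⟩

lemma se_body_vars : varsOf (semiEnrich fl ξs k).body = varsOf (ξs k).body :=
  varsOf_lift _

include hfl in
lemma se_head_vars :
    varsOf (semiEnrich fl ξs k).head = frontierV (ξs k) ∪ varsOf (ξs k).head := by
  show varsOf (insert _ _) = _
  rw [varsOf_insert, varsOf_lift, hatom_vars fl ξs k hfl]

include hfl in
lemma se_frontier : frontierV (semiEnrich fl ξs k) = frontierV (ξs k) := by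
  unfold frontierV
  rw [se_body_vars, se_head_vars fl ξs k hfl]
  rw [Set.inter_union_distrib_left]
  have h1 : varsOf (ξs k).body ∩ frontierV (ξs k) = frontierV (ξs k) :=
    Set.inter_eq_self_of_subset_right (frontier_subset_body _)
  rw [h1]
  exact Set.union_self _

include hfl in
lemma se_evars : evars (semiEnrich fl ξs k) = evars (ξs k) := by
  unfold evars
  rw [se_body_vars, se_head_vars fl ξs k hfl, Set.union_diff_distrib]
  have : frontierV (ξs k) \ varsOf (ξs k).body = ∅ :=
    Set.diff_eq_empty.2 (frontier_subset_body _)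
  rw [this, Set.empty_union]

lemma se_eqOnBody {g g' : ℕ → Val} :
    EqOnBody (semiEnrich fl ξs k) g g' ↔ EqOnBody (ξs k) g g' := by
  unfold EqOnBody
  rw [se_body_vars]

include hfl in
lemma se_eqOnFrontier {g g' : ℕ → Val} :
    EqOnFrontier (semiEnrich fl ξs k) g g' ↔ EqOnFrontier (ξs k) g g' := by
  unfold EqOnFrontier
  rw [se_frontier fl ξs k hfl]

end SE

/-! Monotonicity of chase sequences -/

lemma stdMono {D : Set (TGD R)} {I : Inst R} (s : StdSeq D I) :
    ∀ {i j}, i ≤ j → s.inst i ⊆ s.inst j := by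
  intro i j hij
  induction j with
  | zero => cases Nat.le_zero.1 hij; exact subset_rfl
  | succ j ih =>
    rcases Nat.lt_or_ge i (j+1) with h | h
    · have h1 : s.inst i ⊆ s.inst j := ih (Nat.lt_succ_iff.1 h)
      rcases s.step j with ⟨ξ, _, g, g', _, _, hJ⟩ | ⟨_, hJ⟩
      · rw [hJ]; exact h1.trans Set.subset_union_left
      · rw [hJ]; exact h1
    · have : i = j + 1 := le_antisymm hij h
      subst this; exact subset_rfl

lemma soblMono {D : Set (TGD R)} {I : Inst R} (s : SoblSeq D I) :
    ∀ {i j}, i ≤ j → s.inst i ⊆ s.inst j := by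
  intro i j hij
  induction j with
  | zero => cases Nat.le_zero.1 hij; exact subset_rfl
  | succ j ih =>
    rcases Nat.lt_or_ge i (j+1) with h | h
    · have h1 : s.inst i ⊆ s.inst j := ih (Nat.lt_succ_iff.1 h)
      have := s.step j
      cases hf : s.fired j with
      | none => rw [hf] at this; simp only [Option.elim] at this; rw [this]; exact h1
      | some p =>
        rw [hf] at this; simp only [Option.elim] at this
        rcases this with ⟨_, _, g', _, hJ⟩
        rw [hJ]; exact h1.trans Set.subset_union_left
    · have : i = j + 1 := le_antisymm hij h
      subst this; exact subset_rfl

lemma stdFrozen {D : Set (TGD R)} {I : Inst R} (s : StdSeq D I) {M : ℕ}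
    (hM : NoActive D (s.inst M)) : ∀ m, s.inst m ⊆ s.inst M := by
  have hfr : ∀ j, M ≤ j → s.inst j = s.inst M := by
    intro j hj
    induction j with
    | zero => cases Nat.le_zero.1 hj; rfl
    | succ j ih =>
      rcases Nat.lt_or_ge M (j+1) with h | h
      · have hje : s.inst j = s.inst M := ih (Nat.lt_succ_iff.1 h)
        rcases s.step j with ⟨ξ, hξ, g, g', hA, _, _⟩ | ⟨_, hJ⟩
        · exact absurd hA (by rw [hje]; exact hM ξ hξ g)
        · rw [hJ, hje]
      · exact le_antisymm (Nat.le_of_lt_succ (Nat.lt_succ_of_le h)) hj ▸ rfl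
  intro m
  rcases Nat.le_total m M with h | h
  · exact stdMono s h
  · rw [hfr m h]

/-! The renaming ψ doubling null indices, projections and lifts. -/

def psi : Val → Val
  | .c k => .c k
  | .n k => .n (2*k)

lemma psi_inj : Function.Injective psi := by
  rintro (a | a) (b | b) h
  · simp only [psi, Val.c.injEq] at h; exact congrArg _ h
  · exact Val.noConfusion h
  · exact Val.noConfusion h
  · simp only [psi, Val.n.injEq] at h
    have : a = b := by omega
    exact congrArg _ this

lemma applyT_psi (g : ℕ → Val) (t : Tm) : applyT (psi ∘ g) t = psi (applyT g t) := by
  cases t <;> rfl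

lemma applyA_psi (g : ℕ → Val) (a : TAtom R) :
    applyA (psi ∘ g) a = mapAtom psi (applyA g a) := by
  unfold applyA mapAtom
  simp only [List.map_map]
  congr 1
  exact List.map_congr_left (fun t _ => applyT_psi g t)

def projI (J : Inst (R ⊕ Fin N)) : Inst R :=
  {a | (⟨Sum.inl a.rel, a.args⟩ : Atom (R ⊕ Fin N)) ∈ J}

def liftI (I : Inst R) : Inst (R ⊕ Fin N) :=
  (fun a => ⟨Sum.inl a.rel, a.args⟩) '' I

def psiI (I : Inst R) : Inst R := mapAtom psi '' I

lemma freeInf_psiI (I : Inst R) : FreeInf (psiI I) := by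
  apply Set.infinite_of_injective_forall_mem (f := fun j : ℕ => 2*j+1)
    (by intro a b h; simp only at h; omega)
  intro j
  simp only [Set.mem_setOf_eq]
  rintro ⟨a, ⟨b, hb, rfl⟩, hv⟩
  rcases List.mem_map.1 hv with ⟨w, _, hw⟩
  rcases w with k | k
  · exact Val.noConfusion hw
  · simp only [psi, Val.n.injEq] at hw; omega

lemma domI_liftI (I : Inst R) : domI (liftI (N := N) I) = domI I := by
  ext v
  constructor
  · rintro ⟨a, ⟨b, hb, rfl⟩, hv⟩; exact ⟨b, hb, hv⟩
  · rintro ⟨b, hb, hv⟩; exact ⟨_, ⟨b, hb, rfl⟩, hv⟩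

lemma freeInf_liftI_psiI (I : Inst R) : FreeInf (liftI (N := N) (psiI I)) := by
  have := freeInf_psiI I
  unfold FreeInf at *
  rw [domI_liftI]
  exact this

lemma eqOnFrontier_psi {ξ : TGD R} {g g' : ℕ → Val}
    (h : EqOnFrontier ξ (psi ∘ g) (psi ∘ g')) : EqOnFrontier ξ g g' :=
  fun v hv => psi_inj (h v hv)

lemma trigger_proj_psi {B : Set (TAtom R)} {g : ℕ → Val} {J : Inst (R ⊕ Fin N)}
    (h : instT g ((liftA (N := N)) '' B) ⊆ J) :
    instT (psi ∘ g) B ⊆ psiI (projI J) := by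
  rintro x ⟨a, ha, rfl⟩
  have h1 : applyA g (liftA (N := N) a) ∈ J := h ⟨liftA a, ⟨a, ha, rfl⟩, rfl⟩
  have h2 : applyA g a ∈ projI (N := N) J := h1
  rw [applyA_psi]
  exact ⟨applyA g a, h2, rfl⟩

lemma trigger_lift_psi {B : Set (TAtom R)} {g : ℕ → Val} {X : Inst R}
    (h : instT g B ⊆ X) :
    instT (psi ∘ g) ((liftA (N := N)) '' B) ⊆ liftI (psiI X) := by
  rintro x ⟨a', ⟨a, ha, rfl⟩, rfl⟩
  have h1 : applyA (psi ∘ g) (liftA (N := N) a) =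
      (fun b : Atom R => (⟨Sum.inl b.rel, b.args⟩ : Atom (R ⊕ Fin N)))
        (applyA (psi ∘ g) a) := rfl
  rw [h1, applyA_psi]
  exact ⟨mapAtom psi (applyA g a), ⟨applyA g a, h ⟨a, ha, rfl⟩, rfl⟩, rfl⟩

lemma hatom_apply (fl : Fin N → List ℕ) (k : Fin N) (g' : ℕ → Val) :
    applyA g' (⟨Sum.inr k, (fl k).map Sum.inl⟩ : TAtom (R ⊕ Fin N)) =
      ⟨Sum.inr k, (fl k).map g'⟩ := by
  unfold applyA
  simp only [List.map_map]
  rfl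

lemma active_on_inl {fl : Fin N → List ℕ} {ξs : Fin N → TGD R} {k : Fin N}
    {g : ℕ → Val} {J : Inst (R ⊕ Fin N)}
    (hT : IsTrigger (semiEnrich fl ξs k) g J)
    (hJ : ∀ a ∈ J, ∃ r, a.rel = Sum.inl r) :
    Active (semiEnrich fl ξs k) g J := by
  refine ⟨hT, ?_⟩
  rintro ⟨g', _, hsub⟩
  have hm : applyA g' (⟨Sum.inr k, (fl k).map Sum.inl⟩ : TAtom (R ⊕ Fin N)) ∈ J :=
    hsub ⟨_, Set.mem_insert _ _, rfl⟩
  rcases hJ _ hm with ⟨r, hr⟩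
  rw [hatom_apply] at hr
  cases hr

end
end StmtAux

namespace StmtAux
open Classical
noncomputable section

variable {R : Type} {N : ℕ}

/-! Decoding of scheduling steps into (rule index, frontier tuple) candidates. -/

def dec1 (hN : 0 < N) (n : ℕ) : Fin N := ⟨n % N, Nat.mod_lt _ hN⟩

def dec2 (N : ℕ) (n : ℕ) : List Val := Denumerable.ofNat (List Val) ((n / N).unpair.2)

lemma dec_cover (hN : 0 < N) (k : Fin N) (vals : List Val) (i : ℕ) :
    ∃ n, i ≤ n ∧ dec1 hN n = k ∧ dec2 N n = vals := by
  refine ⟨N * Nat.pair i (Encodable.encode vals) + k.val, ?_, ?_, ?_⟩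
  · calc i ≤ Nat.pair i (Encodable.encode vals) := Nat.left_le_pair _ _
      _ ≤ N * Nat.pair i (Encodable.encode vals) := Nat.le_mul_of_pos_left _ hN
      _ ≤ _ := Nat.le_add_right _ _
  · unfold dec1
    apply Fin.ext
    simp only
    rw [Nat.mul_add_mod, Nat.mod_eq_of_lt k.isLt]
  · unfold dec2
    rw [Nat.mul_add_div hN, Nat.div_eq_of_lt k.isLt, Nat.add_zero, Nat.unpair_pair]
    exact Denumerable.ofNat_encode vals

lemma eqOnFrontier_of_map_eq {ξs : Fin N → TGD R} {fl : Fin N → List ℕ} {k : Fin N}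
    (hfl : ∀ v, v ∈ fl k ↔ v ∈ frontierV (ξs k)) {g g' : ℕ → Val}
    (h : (fl k).map g = (fl k).map g') : EqOnFrontier (ξs k) g g' := by
  intro v hv
  exact List.map_inj_left.1 h v ((hfl v).2 hv)

section Sched
variable (ξs : Fin N → TGD R) (fl : Fin N → List ℕ)
variable (hfl : ∀ i, ∀ v, v ∈ fl i ↔ v ∈ frontierV (ξs i)) (hN : 0 < N)

/-! ### A fair standard-chase scheduler for the semi-enriched rules -/

include hfl in
lemma stdSchedStep (n : ℕ) (I : Inst (R ⊕ Fin N)) (hI : FreeInf I) :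
    ∃ J : Inst (R ⊕ Fin N),
      (StdStep (Set.range (semiEnrich fl ξs)) I J ∨
        (NoActive (Set.range (semiEnrich fl ξs)) I ∧ J = I)) ∧ FreeInf J ∧
      (∀ g, Active (semiEnrich fl ξs (dec1 hN n)) g I →
        (fl (dec1 hN n)).map g = dec2 N n →
        ∀ g₂, EqOnFrontier (semiEnrich fl ξs (dec1 hN n)) g g₂ →
          ¬ Active (semiEnrich fl ξs (dec1 hN n)) g₂ J) := by
  set k := dec1 hN n with hk
  by_cases h1 : ∃ g, Active (semiEnrich fl ξs k) g I ∧ (fl k).map g = dec2 N n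
  · obtain ⟨g, hA, hcls⟩ := h1
    obtain ⟨g', hFE, hfree⟩ := freshChoice hA.1 hI
    refine ⟨I ∪ instT g' (semiEnrich fl ξs k).head, Or.inl ⟨_, ⟨k, rfl⟩, g, g', hA, hFE, rfl⟩,
      hfree, ?_⟩
    intro g₀ hA₀ hcls₀ g₂ hfr₀
    apply not_active_of_sat
    have hfr : EqOnFrontier (semiEnrich fl ξs k) g g₂ := by
      intro v hv
      have hv' : v ∈ frontierV (ξs k) := by
        rwa [se_frontier fl ξs k (hfl k)] at hv
      have h1 : g v = g₀ v :=
        eqOnFrontier_of_map_eq (hfl k) (hcls.trans hcls₀.symm) v hv'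
      rw [h1]; exact hfr₀ v hv
    exact satPersist hFE.1 Set.subset_union_right hfr
  · by_cases h2 : ∃ k' : Fin N, ∃ g, Active (semiEnrich fl ξs k') g I
    · obtain ⟨k', g, hA⟩ := h2
      obtain ⟨g', hFE, hfree⟩ := freshChoice hA.1 hI
      refine ⟨I ∪ instT g' (semiEnrich fl ξs k').head,
        Or.inl ⟨_, ⟨k', rfl⟩, g, g', hA, hFE, rfl⟩, hfree, ?_⟩
      intro g₀ hA₀ hcls₀
      exact absurd ⟨g₀, hA₀, hcls₀⟩ h1
    · refine ⟨I, Or.inr ⟨?_, rfl⟩, hI, ?_⟩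
      · rintro ξ ⟨k', rfl⟩ g hA
        exact h2 ⟨k', g, hA⟩
      · intro g₀ hA₀ _
        exact absurd ⟨k, g₀, hA₀⟩ h2

def stdNextI (n : ℕ) (I : Inst (R ⊕ Fin N)) : Inst (R ⊕ Fin N) :=
  if hI : FreeInf I then (stdSchedStep ξs fl hfl hN n I hI).choose else I

def stdInsts (J : Inst (R ⊕ Fin N)) : ℕ → Inst (R ⊕ Fin N)
  | 0 => J
  | n+1 => stdNextI ξs fl hfl hN n (stdInsts J n)

include hfl hN in
lemma exists_fair_std (J : Inst (R ⊕ Fin N)) (hJ : FreeInf J) :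
    ∃ s : StdSeq (Set.range (semiEnrich fl ξs)) J, s.Fair := by
  have key : ∀ n, FreeInf (stdInsts ξs fl hfl hN J n) ∧
      (StdStep (Set.range (semiEnrich fl ξs)) (stdInsts ξs fl hfl hN J n)
          (stdInsts ξs fl hfl hN J (n+1)) ∨
        (NoActive (Set.range (semiEnrich fl ξs)) (stdInsts ξs fl hfl hN J n) ∧
          stdInsts ξs fl hfl hN J (n+1) = stdInsts ξs fl hfl hN J n)) ∧
      (∀ g, Active (semiEnrich fl ξs (dec1 hN n)) g (stdInsts ξs fl hfl hN J n) →
        (fl (dec1 hN n)).map g = dec2 N n →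
        ∀ g₂, EqOnFrontier (semiEnrich fl ξs (dec1 hN n)) g g₂ →
          ¬ Active (semiEnrich fl ξs (dec1 hN n)) g₂ (stdInsts ξs fl hfl hN J (n+1))) := by
    have hFI : ∀ n, FreeInf (stdInsts ξs fl hfl hN J n) := by
      intro n
      induction n with
      | zero => exact hJ
      | succ n ih =>
        show FreeInf (stdNextI ξs fl hfl hN n _)
        rw [stdNextI, dif_pos ih]
        exact (stdSchedStep ξs fl hfl hN n _ ih).choose_spec.2.1
    intro n
    refine ⟨hFI n, ?_, ?_⟩
    · have : stdInsts ξs fl hfl hN J (n+1) = stdNextI ξs fl hfl hN n _ := rfl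
      rw [this, stdNextI, dif_pos (hFI n)]
      exact (stdSchedStep ξs fl hfl hN n _ (hFI n)).choose_spec.1
    · have : stdInsts ξs fl hfl hN J (n+1) = stdNextI ξs fl hfl hN n _ := rfl
      rw [this, stdNextI, dif_pos (hFI n)]
      exact (stdSchedStep ξs fl hfl hN n _ (hFI n)).choose_spec.2.2
  refine ⟨⟨stdInsts ξs fl hfl hN J, rfl, fun i => (key i).2.1⟩, ?_⟩
  intro i ξ hξ g hA
  obtain ⟨k, rfl⟩ := hξ
  obtain ⟨n, hin, hd1, hd2⟩ := dec_cover hN k ((fl k).map g) i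
  simp only at hA ⊢
  by_cases hAn : Active (semiEnrich fl ξs k) g (stdInsts ξs fl hfl hN J n)
  · refine ⟨n+1, Nat.le_succ_of_le hin, ?_⟩
    have h3 := (key n).2.2
    rw [hd1] at h3
    exact h3 g hAn (by rw [hd2]) g (fun v _ => rfl)
  · exact ⟨n, hin, hAn⟩

/-! ### A fair semi-oblivious scheduler -/

include hfl in
lemma soblSchedStep (n : ℕ) (I : Inst R) (P : Set (TGD R × (ℕ → Val)))
    (hI : FreeInf I) :
    ∃ t : Inst R × Set (TGD R × (ℕ → Val)) × Option (TGD R × (ℕ → Val)),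
      (t.2.2.elim (t.1 = I ∧ t.2.1 = P)
        (fun p => p.1 ∈ Set.range ξs ∧ IsTrigger p.1 p.2 I ∧
          (∃ g', FreshExt I p.1 p.2 g' ∧ t.1 = I ∪ instT g' p.1.head) ∧
          t.2.1 = insert p P ∧
          ¬∃ q ∈ P, q.1 = p.1 ∧ EqOnFrontier p.1 q.2 p.2)) ∧
      FreeInf t.1 ∧
      (∀ g, IsTrigger (ξs (dec1 hN n)) g I → (fl (dec1 hN n)).map g = dec2 N n →
        ∃ q ∈ t.2.1, q.1 = ξs (dec1 hN n) ∧ EqOnFrontier (ξs (dec1 hN n)) q.2 g) := by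
  set k := dec1 hN n with hk
  by_cases h1 : ∃ g, IsTrigger (ξs k) g I ∧ (fl k).map g = dec2 N n ∧
      ¬∃ q ∈ P, q.1 = ξs k ∧ EqOnFrontier (ξs k) q.2 g
  · obtain ⟨g, hT, hcls, hnew⟩ := h1
    obtain ⟨g', hFE, hfree⟩ := freshChoice hT hI
    refine ⟨⟨I ∪ instT g' (ξs k).head, insert (ξs k, g) P, some (ξs k, g)⟩,
      ⟨⟨k, rfl⟩, hT, ⟨g', hFE, rfl⟩, rfl, hnew⟩, hfree, ?_⟩
    intro g₀ hT₀ hcls₀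
    refine ⟨(ξs k, g), Set.mem_insert _ _, rfl, ?_⟩
    exact eqOnFrontier_of_map_eq (hfl k) (hcls.trans hcls₀.symm)
  · refine ⟨⟨I, P, none⟩, ⟨rfl, rfl⟩, hI, ?_⟩
    intro g₀ hT₀ hcls₀
    by_contra hno
    push_neg at hno
    apply h1
    refine ⟨g₀, hT₀, hcls₀, ?_⟩
    rintro ⟨q, hq, hq1, hq2⟩
    exact hno q hq hq1 hq2

def soblNextS (n : ℕ) (S : Inst R × Set (TGD R × (ℕ → Val))) :
    Inst R × Set (TGD R × (ℕ → Val)) × Option (TGD R × (ℕ → Val)) :=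
  if hI : FreeInf S.1 then (soblSchedStep ξs fl hfl hN n S.1 S.2 hI).choose
  else ⟨S.1, S.2, none⟩

def soblSt (I0 : Inst R) : ℕ → Inst R × Set (TGD R × (ℕ → Val))
  | 0 => (I0, ∅)
  | n+1 => ((soblNextS ξs fl hfl hN n (soblSt I0 n)).1,
            (soblNextS ξs fl hfl hN n (soblSt I0 n)).2.1)

def soblFired (I0 : Inst R) (n : ℕ) : Option (TGD R × (ℕ → Val)) :=
  (soblNextS ξs fl hfl hN n (soblSt ξs fl hfl hN I0 n)).2.2

include hfl hN in
lemma exists_fair_sobl (I0 : Inst R) (hI0 : FreeInf I0) :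
    ∃ s : SoblSeq (Set.range ξs) I0, s.Fair := by
  set st := soblSt ξs fl hfl hN I0 with hst
  set fd := soblFired ξs fl hfl hN I0 with hfd
  have hFI : ∀ n, FreeInf (st n).1 := by
    intro n
    induction n with
    | zero => exact hI0
    | succ n ih =>
      show FreeInf ((soblNextS ξs fl hfl hN n (st n)).1)
      rw [soblNextS, dif_pos ih]
      exact (soblSchedStep ξs fl hfl hN n (st n).1 (st n).2 ih).choose_spec.2.1
  have hstep : ∀ n, soblNextS ξs fl hfl hN n (st n)
      = (soblSchedStep ξs fl hfl hN n (st n).1 (st n).2 (hFI n)).choose := by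
    intro n; rw [soblNextS, dif_pos (hFI n)]
  have hC1 : ∀ n, (fd n).elim ((st (n+1)).1 = (st n).1 ∧ (st (n+1)).2 = (st n).2)
      (fun p => p.1 ∈ Set.range ξs ∧ IsTrigger p.1 p.2 (st n).1 ∧
        (∃ g', FreshExt (st n).1 p.1 p.2 g' ∧
          (st (n+1)).1 = (st n).1 ∪ instT g' p.1.head) ∧
        (st (n+1)).2 = insert p (st n).2 ∧
        ¬∃ q ∈ (st n).2, q.1 = p.1 ∧ EqOnFrontier p.1 q.2 p.2) := by
    intro n
    have h := (soblSchedStep ξs fl hfl hN n (st n).1 (st n).2 (hFI n)).choose_spec.1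
    rw [← hstep n] at h
    exact h
  have hC3 : ∀ n, ∀ g, IsTrigger (ξs (dec1 hN n)) g (st n).1 →
      (fl (dec1 hN n)).map g = dec2 N n →
      ∃ q ∈ (st (n+1)).2, q.1 = ξs (dec1 hN n) ∧
        EqOnFrontier (ξs (dec1 hN n)) q.2 g := by
    intro n
    have h := (soblSchedStep ξs fl hfl hN n (st n).1 (st n).2 (hFI n)).choose_spec.2.2
    rw [← hstep n] at h
    exact h
  have hmem : ∀ n p, p ∈ (st n).2 ↔ ∃ i, i < n ∧ fd i = some p := by
    intro n
    induction n with
    | zero =>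
      intro p
      constructor
      · intro h; exact absurd h (Set.notMem_empty p)
      · rintro ⟨i, hi, _⟩; omega
    | succ n ih =>
      intro p
      have h1 := hC1 n
      cases hf : fd n with
      | none =>
        rw [hf] at h1
        simp only [Option.elim] at h1
        rw [h1.2, ih p]
        constructor
        · rintro ⟨i, hi, h⟩; exact ⟨i, by omega, h⟩
        · rintro ⟨i, hi, h⟩
          refine ⟨i, ?_, h⟩
          rcases Nat.lt_succ_iff_lt_or_eq.1 hi with h' | rfl
          · exact h'
          · rw [hf] at h; cases h
      | some q =>
        rw [hf] at h1
        simp only [Option.elim] at h1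
        rw [h1.2.2.2.1]
        constructor
        · rintro (rfl | h)
          · exact ⟨n, Nat.lt_succ_self n, hf⟩
          · rcases (ih p).1 h with ⟨i, hi, h'⟩
            exact ⟨i, by omega, h'⟩
        · rintro ⟨i, hi, h⟩
          rcases Nat.lt_succ_iff_lt_or_eq.1 hi with h' | rfl
          · exact Or.inr ((ih p).2 ⟨i, h', h⟩)
          · rw [hf] at h
            cases h
            exact Or.inl rfl
  have hmono : ∀ a b, a ≤ b → (st a).1 ⊆ (st b).1 := by
    intro a b hab
    induction b with
    | zero => cases Nat.le_zero.1 hab; exact subset_rfl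
    | succ b ih =>
      rcases Nat.lt_or_ge a (b+1) with h | h
      · have h1 : (st a).1 ⊆ (st b).1 := ih (Nat.lt_succ_iff.1 h)
        have h2 := hC1 b
        cases hf : fd b with
        | none =>
          rw [hf] at h2; simp only [Option.elim] at h2
          rw [h2.1]; exact h1
        | some q =>
          rw [hf] at h2; simp only [Option.elim] at h2
          rcases h2.2.2.1 with ⟨g', _, hJ⟩
          rw [hJ]; exact h1.trans Set.subset_union_left
      · have : a = b + 1 := le_antisymm hab h
        subst this; exact subset_rfl
  have honce : ∀ i j ξ g g₂, i < j → fd i = some (ξ, g) → fd j = some (ξ, g₂) →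
      EqOnFrontier ξ g g₂ → False := by
    intro i j ξ g g₂ hij hi hj hfr
    have h2 := hC1 j
    rw [hj] at h2
    simp only [Option.elim] at h2
    exact h2.2.2.2.2 ⟨(ξ, g), (hmem j (ξ, g)).2 ⟨i, hij, hi⟩, rfl, hfr⟩
  refine ⟨⟨fun n => (st n).1, fd, rfl, ?_, ?_⟩, ?_⟩
  · intro i
    have h1 := hC1 i
    cases hf : fd i with
    | none =>
      rw [hf] at h1; simp only [Option.elim] at h1 ⊢
      exact h1.1
    | some q =>
      rw [hf] at h1; simp only [Option.elim] at h1 ⊢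
      exact ⟨h1.1, h1.2.1, h1.2.2.1⟩
  · intro i j ξ g g₂ hi hj hfr
    rcases lt_trichotomy i j with h | h | h
    · exact absurd (honce i j ξ g g₂ h hi hj hfr) not_false
    · exact h
    · exact absurd (honce j i ξ g₂ g h hj hi (fun v hv => (hfr v hv).symm)) not_false
  · intro i ξ hξ g hT
    obtain ⟨k, rfl⟩ := hξ
    obtain ⟨n, hin, hd1, hd2⟩ := dec_cover hN k ((fl k).map g) i
    have hTn : IsTrigger (ξs k) g (st n).1 := hT.trans (hmono i n hin)
    have h3 := hC3 n
    rw [hd1] at h3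
    obtain ⟨q, hqmem, hq1, hq2⟩ := h3 g hTn (by rw [hd2])
    obtain ⟨i', hi', hfd'⟩ := (hmem (n+1) q).1 hqmem
    obtain ⟨q1, q2⟩ := q
    simp only at hq1 hq2
    subst hq1
    exact ⟨i', q2, hfd', hq2⟩

end Sched
end
end StmtAux

namespace StmtAux
open Classical
noncomputable section

variable {R : Type} {N : ℕ}

lemma forward (ξs : Fin N → TGD R) (fl : Fin N → List ℕ)
    (hfl : ∀ i, ∀ v, v ∈ fl i ↔ v ∈ frontierV (ξs i))
    (hL : ∀ I : Inst R, ∀ s : SoblSeq (Set.range ξs) I, s.Fair → s.Terminates)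
    (I : Inst (R ⊕ Fin N)) (s : StdSeq (Set.range (semiEnrich fl ξs)) I)
    (hfair : s.Fair) : s.Terminates := by
  by_contra hterm
  have hstep : ∀ t, StdStep (Set.range (semiEnrich fl ξs)) (s.inst t) (s.inst (t+1)) := by
    intro t
    rcases s.step t with h | ⟨hNA, _⟩
    · exact h
    · exact absurd ⟨t, hNA⟩ hterm
  choose ξt hmem gt g't hA hFE hJ using hstep
  choose kt hkt using hmem
  have hN : 0 < N := (kt 0).pos
  -- each (rule, frontier class) is fired at most once
  have hdist : ∀ t t', t < t' → kt t = kt t' →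
      EqOnFrontier (semiEnrich fl ξs (kt t)) (gt t) (gt t') → False := by
    intro t t' htt hkk hfr
    have e : ξt t' = ξt t := by rw [← hkt t', ← hkt t, hkk]
    have hsub : instT (g't t) (ξt t).head ⊆ s.inst t' := by
      have h1 : instT (g't t) (ξt t).head ⊆ s.inst (t+1) := by
        rw [hJ t]; exact Set.subset_union_right
      exact h1.trans (stdMono s htt)
    have hfr' : EqOnFrontier (ξt t) (gt t) (gt t') := by rw [← hkt t]; exact hfr
    have hsat := satPersist (ξ := ξt t) (hFE t).1 hsub hfr'
    have hA' := hA t'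
    rw [e] at hA'
    exact hA'.2 hsat
  obtain ⟨k, hk⟩ := Finite.exists_infinite_fiber kt
  haveI : Infinite ↥(kt ⁻¹' {k}) := hk
  -- the sobl chase on the renamed projected limit
  set L : Inst (R ⊕ Fin N) := ⋃ t, s.inst t with hLdef
  set Istar : Inst R := psiI (projI L) with hIstar
  obtain ⟨s', hs'fair⟩ := exists_fair_sobl ξs fl hfl hN Istar (freeInf_psiI _)
  obtain ⟨M, hM⟩ := hL Istar s' hs'fair
  have hfires : ∀ t : ↥(kt ⁻¹' {k}), ∃ j g₀, s'.fired j = some (ξs k, g₀) ∧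
      EqOnFrontier (ξs k) g₀ (psi ∘ gt t) := by
    intro t
    have ht : kt (t : ℕ) = k := t.2
    have htr : instT (gt t) ((liftA (N := N)) '' (ξs k).body) ⊆ L := by
      have h1 : instT (gt t) (ξt (t : ℕ)).body ⊆ s.inst (t : ℕ) := (hA (t : ℕ)).1
      rw [← hkt (t : ℕ), ht] at h1
      exact h1.trans (Set.subset_iUnion (fun t => s.inst t) (t : ℕ))
    have htr2 : IsTrigger (ξs k) (psi ∘ gt t) (s'.inst 0) := by
      rw [s'.init]
      exact trigger_proj_psi htr
    exact hs'fair 0 (ξs k) ⟨k, rfl⟩ (psi ∘ gt t) htr2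
  choose F G hF hG using hfires
  have hFM : ∀ t, F t < M := by
    intro t
    by_contra h
    have := hM (F t) (Nat.le_of_not_lt h)
    rw [hF t] at this
    cases this
  have hinj : Function.Injective (fun t : ↥(kt ⁻¹' {k}) => (⟨F t, hFM t⟩ : Fin M)) := by
    intro t t' h
    simp only [Fin.mk.injEq] at h
    by_contra hne
    have hGG : G t = G t' := by
      have h1 := hF t
      rw [h, hF t'] at h1
      exact ((Prod.ext_iff.1 (Option.some.inj h1)).2).symm
    have hfr : EqOnFrontier (ξs k) (psi ∘ gt t) (psi ∘ gt t') := by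
      intro v hv
      exact (hG t v hv).symm.trans (hGG ▸ hG t' v hv)
    have hfr2 : EqOnFrontier (ξs k) (gt t) (gt t') := eqOnFrontier_psi hfr
    have hfr3 : EqOnFrontier (semiEnrich fl ξs k) (gt t) (gt t') := by
      rw [se_eqOnFrontier fl ξs k (hfl k)]
      exact hfr2
    have hne' : (t : ℕ) ≠ (t' : ℕ) := fun hc => hne (Subtype.ext hc)
    rcases lt_or_gt_of_ne hne' with hlt | hlt
    · have ht : kt (t : ℕ) = k := t.2
      have ht' : kt ((t' : ℕ)) = k := t'.2
      refine hdist (t : ℕ) (t' : ℕ) hlt (ht.trans ht'.symm) ?_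
      rw [ht]; exact hfr3
    · have ht : kt (t : ℕ) = k := t.2
      have ht' : kt ((t' : ℕ)) = k := t'.2
      refine hdist (t' : ℕ) (t : ℕ) hlt (ht'.trans ht.symm) ?_
      rw [ht']
      exact fun v hv => (hfr3 v hv).symm
  haveI : Finite ↥(kt ⁻¹' {k}) := Finite.of_injective _ hinj
  exact not_finite ↥(kt ⁻¹' {k})

lemma backward (ξs : Fin N → TGD R) (fl : Fin N → List ℕ)
    (hfl : ∀ i, ∀ v, v ∈ fl i ↔ v ∈ frontierV (ξs i))
    (hR : ∀ I : Inst (R ⊕ Fin N),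
      ∀ s : StdSeq (Set.range (semiEnrich fl ξs)) I, s.Fair → s.Terminates)
    (I : Inst R) (s : SoblSeq (Set.range ξs) I) (hfair : s.Fair) : s.Terminates := by
  by_contra hterm
  have hinf : ∀ i, ∃ j, i ≤ j ∧ s.fired j ≠ none := by
    intro i
    by_contra h
    push_neg at h
    exact hterm ⟨i, h⟩
  set T0 : Set ℕ := {j | s.fired j ≠ none} with hT0
  have hT0inf : T0.Infinite := by
    apply Set.infinite_of_forall_exists_gt
    intro a
    obtain ⟨j, hj1, hj2⟩ := hinf (a+1)
    exact ⟨j, hj2, by omega⟩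
  have hdata : ∀ j : ↥T0, ∃ ξ g, s.fired (j : ℕ) = some (ξ, g) := by
    intro j
    cases hf : s.fired (j : ℕ) with
    | none => exact absurd hf j.2
    | some p => exact ⟨p.1, p.2, rfl⟩
  choose ξj gj hj using hdata
  have hstepj : ∀ j : ↥T0, (ξj j) ∈ Set.range ξs ∧
      IsTrigger (ξj j) (gj j) (s.inst (j : ℕ)) := by
    intro j
    have h := s.step (j : ℕ)
    rw [hj j] at h
    simp only [Option.elim] at h
    exact ⟨h.1, h.2.1⟩
  choose kj hkj using fun j => (hstepj j).1
  haveI : Infinite ↥T0 := Set.infinite_coe_iff.2 hT0inf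
  have hN : 0 < N := by
    obtain ⟨j0, _, hj0⟩ := hinf 0
    exact (kj ⟨j0, hj0⟩).pos
  obtain ⟨k, hk⟩ := Finite.exists_infinite_fiber kj
  haveI : Infinite ↥(kj ⁻¹' {k}) := hk
  set L : Inst R := ⋃ i, s.inst i with hLdef
  set Jstar : Inst (R ⊕ Fin N) := liftI (psiI L) with hJstar
  obtain ⟨st, hstfair⟩ := exists_fair_std ξs fl hfl hN Jstar (freeInf_liftI_psiI _)
  obtain ⟨M, hMA⟩ := hR Jstar st hstfair
  -- each fired class contributes a distinct H-atom to st.inst M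
  have hatoms : ∀ t : ↥(kj ⁻¹' {k}),
      (⟨Sum.inr k, (fl k).map (psi ∘ gj t.val)⟩ : Atom (R ⊕ Fin N)) ∈ st.inst M := by
    intro t
    have ht : kj t.val = k := t.2
    have htr : instT (gj t.val) (ξs k).body ⊆ L := by
      have h1 := (hstepj t.val).2
      rw [← hkj t.val, ht] at h1
      exact h1.trans (Set.subset_iUnion (fun i => s.inst i) ((t.val : ℕ)))
    have htr2 : IsTrigger (semiEnrich fl ξs k) (psi ∘ gj t.val) (st.inst 0) := by
      rw [st.init]
      exact trigger_lift_psi htr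
    have hact : Active (semiEnrich fl ξs k) (psi ∘ gj t.val) (st.inst 0) := by
      apply active_on_inl htr2
      rw [st.init]
      rintro a ⟨b, _, rfl⟩
      exact ⟨b.rel, rfl⟩
    obtain ⟨m, _, hnA⟩ := hstfair 0 _ ⟨k, rfl⟩ _ hact
    have htrm : IsTrigger (semiEnrich fl ξs k) (psi ∘ gj t.val) (st.inst m) :=
      trigger_mono (stdMono st (Nat.zero_le m)) htr2
    have hsat : ∃ g', EqOnBody (semiEnrich fl ξs k) (psi ∘ gj t.val) g' ∧
        instT g' (semiEnrich fl ξs k).head ⊆ st.inst m := by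
      by_contra hno
      exact hnA ⟨htrm, hno⟩
    obtain ⟨g', hgb, hgs⟩ := hsat
    have hH : applyA g' (⟨Sum.inr k, (fl k).map Sum.inl⟩ : TAtom (R ⊕ Fin N)) ∈ st.inst m :=
      hgs ⟨_, Set.mem_insert _ _, rfl⟩
    rw [hatom_apply] at hH
    have hmapeq : (fl k).map g' = (fl k).map (psi ∘ gj t.val) := by
      apply List.map_inj_left.2
      intro v hv
      have hv2 : v ∈ varsOf (semiEnrich fl ξs k).body := by
        rw [se_body_vars]
        exact frontier_subset_body _ ((hfl k v).1 hv)
      exact (hgb v hv2).symm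
    rw [hmapeq] at hH
    exact stdFrozen st hMA m hH
  -- only finitely many Sum.inr atoms in st.inst M
  have hSR : ∀ m, {a : Atom (R ⊕ Fin N) | a ∈ st.inst m ∧ ∃ i, a.rel = Sum.inr i}.Finite := by
    intro m
    induction m with
    | zero =>
      convert Set.finite_empty
      ext a
      simp only [Set.mem_setOf_eq, Set.mem_empty_iff_false, iff_false, not_and]
      intro ha
      rw [st.init] at ha
      rcases ha with ⟨b, _, rfl⟩
      rintro ⟨i, hi⟩
      cases hi
    | succ m ih =>
      rcases st.step m with ⟨ξ, hξ, g, g', _, _, hJ⟩ | ⟨_, hJ⟩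
      · obtain ⟨k', rfl⟩ := hξ
        apply Set.Finite.subset
          (ih.insert (applyA g' (⟨Sum.inr k', (fl k').map Sum.inl⟩ : TAtom (R ⊕ Fin N))))
        rintro a ⟨ha, i, hrel⟩
        rw [hJ] at ha
        rcases ha with ha | ⟨b, hb, rfl⟩
        · exact Set.mem_insert_of_mem _ ⟨ha, i, hrel⟩
        · rcases hb with rfl | ⟨c, _, rfl⟩
          · exact Set.mem_insert _ _
          · exact absurd hrel (by rintro ⟨⟩ <;> exact Sum.noConfusion (by assumption))
      · rw [hJ]
        exact ih
  have hfin := hSR M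
  have hinj : Function.Injective (fun t : ↥(kj ⁻¹' {k}) =>
      (⟨⟨Sum.inr k, (fl k).map (psi ∘ gj t.val)⟩, hatoms t, k, rfl⟩ :
        ↥{a : Atom (R ⊕ Fin N) | a ∈ st.inst M ∧ ∃ i, a.rel = Sum.inr i})) := by
    intro t t' h
    simp only [Subtype.mk.injEq, Atom.mk.injEq, true_and] at h
    have hfr : EqOnFrontier (ξs k) (psi ∘ gj t.val) (psi ∘ gj t'.val) :=
      eqOnFrontier_of_map_eq (hfl k) h
    have hfr2 : EqOnFrontier (ξs k) (gj t.val) (gj t'.val) := eqOnFrontier_psi hfr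
    have ht : kj t.val = k := t.2
    have ht' : kj t'.val = k := t'.2
    have heq : (t.val : ℕ) = (t'.val : ℕ) := by
      apply s.once _ _ (ξj t.val) (gj t.val) (gj t'.val) (hj t.val)
      · have : ξj t'.val = ξj t.val := by rw [← hkj t'.val, ← hkj t.val, ht, ht']
        rw [← this]
        exact hj t'.val
      · rw [← hkj t.val, ht]
        exact hfr2
    exact Subtype.ext (Subtype.ext heq)
  haveI : Finite ↥{a : Atom (R ⊕ Fin N) | a ∈ st.inst M ∧ ∃ i, a.rel = Sum.inr i} :=
    hfin
  haveI : Finite ↥(kj ⁻¹' {k}) := Finite.of_injective _ hinj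
  exact not_finite ↥(kj ⁻¹' {k})

end
end StmtAux


/-- Semi-enrichment characterizes semi-oblivious termination: the fair
semi-oblivious chase with Σ terminates on every instance iff the fair
standard chase with the semi-enriched Σ̃ terminates on every instance. -/
theorem stmt10 {Rel : Type} (N : ℕ) (ξs : Fin N → TGD Rel)
    (fl : Fin N → List ℕ)
    (hfl : ∀ i, ∀ v, v ∈ fl i ↔ v ∈ frontierV (ξs i)) :
    ((∀ I : Inst Rel, ∀ s : SoblSeq (Set.range ξs) I, s.Fair → s.Terminates) ↔
      (∀ I : Inst (Rel ⊕ Fin N),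
        ∀ s : StdSeq (Set.range (semiEnrich fl ξs)) I,
          s.Fair → s.Terminates)) := by
  constructor
  · intro hL I s hfair
    exact StmtAux.forward ξs fl hfl hL I s hfair
  · intro hR I s hfair
    exact StmtAux.backward ξs fl hfl hR I s hfair
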